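/- For every N ≥ 1 and all real x, y: Σ_{n=0}^{N} φ_n(x) φ_n(y) + √((N+1)/2) · φ_N(x) · (ε φ_{N+1})(y) = Σ_{k=0}^{N−1} φ_k(x) φ_k(y) + (√(2N)/2) · φ_N(x) · (ε φ_{N−1})(y), where (ε g)(y) = ½ ∫_ℝ sgn(y − u) g(u) du. Equivalently, the GOE kernel S_{N+1,1}(x,y) = Σ_{n=0}^{N} φ_n(x) φ_n(y) + √((N+1)/2) φ_N(x) (ε φ_{N+1})(y) equals the GUE kernel S_{N,2}(x,y) = Σ_{k=0}^{N−1} φ_k(x) φ_k(y) plus the rank-one term ½ (2N)^{1/4} φ_N(x) · (2N)^{1/4} (ε φ_{N−1})(y). -/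

import Mathlib

open Real Filter MeasureTheory

/-- Physicists' Hermite polynomial `H_n(x) = (-1)^n e^{x²} (d^n/dx^n) e^{-x²}`. -/
noncomputable def physHermite (n : ℕ) (x : ℝ) : ℝ :=
  (-1 : ℝ) ^ n * Real.exp (x ^ 2) * iteratedDeriv n (fun t : ℝ => Real.exp (-t ^ 2)) x

/-- Normalizing constant `h_n = √π 2^n n!`. -/
noncomputable def hNorm (n : ℕ) : ℝ := Real.sqrt Real.pi * 2 ^ n * (n.factorial : ℝ)

/-- Oscillator wave function `φ_n(x) = h_n^{-1/2} e^{-x²/2} H_n(x)`. -/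
noncomputable def osc (n : ℕ) (x : ℝ) : ℝ :=
  hNorm n ^ (-(1 : ℝ) / 2) * Real.exp (-x ^ 2 / 2) * physHermite n x

/-- Airy function `Ai(x) = π⁻¹ lim_{R→∞} ∫₀^R cos(t³/3 + xt) dt`. -/
noncomputable def Ai (x : ℝ) : ℝ :=
  Real.pi⁻¹ *
    limUnder Filter.atTop (fun R : ℝ => ∫ t in (0 : ℝ)..R, Real.cos (t ^ 3 / 3 + x * t))

/-- Scaling constant `τ_N = 2^{-1/2} N^{-1/6}`. -/
noncomputable def tauN (N : ℕ) : ℝ := (2 : ℝ) ^ (-(1 : ℝ) / 2) * (N : ℝ) ^ (-(1 : ℝ) / 6)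

/-- `Δ_N = (√(2N+1) - √(2N-1))/τ_N`. -/
noncomputable def DeltaN (N : ℕ) : ℝ :=
  (Real.sqrt (2 * N + 1) - Real.sqrt (2 * N - 1)) / tauN N

/-- `(ε g)(y) = ½ ∫_ℝ sgn(y - u) g(u) du`. -/
noncomputable def epsOp (g : ℝ → ℝ) (y : ℝ) : ℝ :=
  (1 / 2) * ∫ u : ℝ, Real.sign (y - u) * g u

/-!
Writing `H_n(x) = 2^{n/2} He_n(√2 x)` in terms of Mathlib's probabilists' Hermite polynomials
gives `H_{n+1}' = 2(n+1) H_n` and `H_{n+2} = 2x H_{n+1} - 2(n+1) H_n`; together with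
`h_{n+1} = 2(n+1) h_n` they yield the ladder relation
`φ_{n+1}' = √((n+1)/2) φ_n - √((n+2)/2) φ_{n+2}`.
Since `φ_{n+1}` is a polynomial times `e^{-x²/2}`, it vanishes at `±∞` and `ε` inverts
differentiation on it, so applying `ε` to the ladder relation with `n = N - 1` gives
`√(N/2) εφ_{N-1} - √((N+1)/2) εφ_{N+1} = φ_N`; multiplied by `φ_N(x)`, this is exactly the
difference of the two kernels.
-/

open Polynomial Topology Set

theorem Polynomial.derivative_hermite_succ (n : ℕ) :
    derivative (hermite (n + 1)) = (n + 1 : ℤ[X]) * hermite n := by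
  induction n with
  | zero => simp
  | succ n ih =>
    rw [hermite_succ (n + 1), derivative_sub, derivative_mul, derivative_X, ih, derivative_mul]
    simp only [derivative_add, derivative_natCast, derivative_one]
    push_cast
    linear_combination (-(n + 1) : ℤ[X]) * hermite_succ n

theorem Polynomial.integrable_eval_mul_exp_neg_mul_sq (p : ℝ[X]) {b : ℝ} (hb : 0 < b) :
    Integrable fun x => p.eval x * exp (-b * x ^ 2) := by
  simp_rw [eval_eq_sum_range, Finset.sum_mul]
  refine integrable_finsetSum _ fun i _ => ?_
  simpa [mul_assoc, rpow_natCast] using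
    (integrable_rpow_mul_exp_neg_mul_sq hb (s := i) (by linarith [i.cast_nonneg (α := ℝ)])).const_mul
      (p.coeff i)

theorem Polynomial.tendsto_eval_mul_exp_neg_mul_sq_cocompact (p : ℝ[X]) {b : ℝ} (hb : 0 < b) :
    Tendsto (fun x => p.eval x * exp (-b * x ^ 2)) (cocompact ℝ) (𝓝 0) := by
  simp_rw [eval_eq_sum_range, Finset.sum_mul]
  rw [← Finset.sum_const_zero (s := Finset.range (p.natDegree + 1))]
  refine tendsto_finsetSum _ fun i _ => squeeze_zero_norm (fun x => ?_)
    (by simpa using (tendsto_rpow_abs_mul_exp_neg_mul_sq_cocompact hb i).const_mul |p.coeff i|)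
  simp [mul_assoc]

theorem Real.sqrt_div_two (a : ℝ) : √(a / 2) = √(2 * a) / 2 := by
  rw [show 2 * a = 2 ^ 2 * (a / 2) by ring, sqrt_mul (sq_nonneg 2), sqrt_sq zero_le_two]
  ring

theorem Real.measurable_sign : Measurable Real.sign :=
  Measurable.ite (measurableSet_lt measurable_id measurable_const) measurable_const
    (Measurable.ite (measurableSet_lt measurable_const measurable_id) measurable_const
      measurable_const)

theorem Real.abs_sign_le_one (r : ℝ) : |Real.sign r| ≤ 1 := by
  rcases Real.sign_apply_eq r with h | h | h <;> simp [h]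

theorem physHermite_eq_aeval (n : ℕ) (x : ℝ) :
    physHermite n x = √2 ^ n * aeval (√2 * x) (hermite n) := by
  have hsq (t : ℝ) : (√2 * t) ^ 2 / 2 = t ^ 2 := by
    rw [mul_pow, sq_sqrt zero_le_two]; ring
  have hgauss : (fun t : ℝ => exp (-t ^ 2)) = fun t => exp (-((√2 * t) ^ 2 / 2)) := by
    simp only [hsq]
  have hsmooth : ContDiff ℝ n fun t : ℝ => exp (-(t ^ 2 / 2)) := by fun_prop
  rw [physHermite, hgauss, iteratedDeriv_comp_const_mul hsmooth, iteratedDeriv_eq_iterate]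
  dsimp only
  rw [deriv_gaussian_eq_hermite_mul_gaussian, hsq]
  have hexp : exp (x ^ 2) * exp (-x ^ 2) = 1 := by rw [← exp_add]; simp
  have hsign : (-1 : ℝ) ^ n * (-1) ^ n = 1 := by rw [← mul_pow]; norm_num
  linear_combination (√2 ^ n * aeval (√2 * x) (hermite n)) * ((-1) ^ n * (-1) ^ n * hexp + hsign)

theorem hasDerivAt_physHermite_succ (n : ℕ) (x : ℝ) :
    HasDerivAt (physHermite (n + 1)) (2 * (n + 1) * physHermite n x) x := by
  rw [show physHermite (n + 1) = fun y => √2 ^ (n + 1) * aeval (√2 * y) (hermite (n + 1)) from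
    funext (physHermite_eq_aeval (n + 1))]
  refine (((Polynomial.hasDerivAt_aeval (hermite (n + 1)) (√2 * x)).comp x
    ((hasDerivAt_id x).const_mul √2)).const_mul (√2 ^ (n + 1))).congr_deriv ?_
  rw [physHermite_eq_aeval, derivative_hermite_succ]
  simp only [map_mul, map_add, map_natCast, map_one, mul_one]
  linear_combination (√2 ^ n * (n + 1) * aeval (√2 * x) (hermite n)) * sq_sqrt zero_le_two

theorem physHermite_succ_succ (n : ℕ) (x : ℝ) :
    physHermite (n + 2) x = 2 * x * physHermite (n + 1) x - 2 * (n + 1) * physHermite n x := by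
  simp only [physHermite_eq_aeval, hermite_succ (n + 1), derivative_hermite_succ, map_sub, map_mul,
    aeval_X, map_add, map_natCast, map_one]
  linear_combination (√2 ^ n * (x * √2 * aeval (√2 * x) (hermite (n + 1))
    - (n + 1) * aeval (√2 * x) (hermite n))) * sq_sqrt zero_le_two

theorem hNorm_pos (n : ℕ) : 0 < hNorm n := by
  unfold hNorm; positivity

theorem hNorm_succ (n : ℕ) : hNorm (n + 1) = 2 * (n + 1) * hNorm n := by
  simp only [hNorm, Nat.factorial_succ, pow_succ]; push_cast; ring

theorem hNorm_rpow_neg_half_eq_mul_succ (n : ℕ) :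
    hNorm n ^ (-(1 : ℝ) / 2) = √(2 * (n + 1)) * hNorm (n + 1) ^ (-(1 : ℝ) / 2) := by
  have hpos : (0 : ℝ) < 2 * (n + 1) := by positivity
  rw [hNorm_succ, mul_rpow hpos.le (hNorm_pos n).le, ← mul_assoc, neg_div, rpow_neg hpos.le,
    ← sqrt_eq_rpow, mul_inv_cancel₀ (sqrt_pos.2 hpos).ne', one_mul]

theorem exists_osc_eq_eval_mul_exp (n : ℕ) :
    ∃ p : ℝ[X], ∀ x, osc n x = p.eval x * exp (-(1 / 2) * x ^ 2) :=
  ⟨C (hNorm n ^ (-(1 : ℝ) / 2) * √2 ^ n) * ((hermite n).map (algebraMap ℤ ℝ)).comp (C √2 * X),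
    fun x => by
      rw [osc, physHermite_eq_aeval, eval_mul, eval_C, eval_comp, eval_mul, eval_C, eval_X,
        eval_map_algebraMap, show -(1 / 2) * x ^ 2 = -x ^ 2 / 2 by ring]
      ring⟩

theorem integrable_osc (n : ℕ) : Integrable (osc n) := by
  obtain ⟨p, hp⟩ := exists_osc_eq_eval_mul_exp n
  simpa only [← hp] using p.integrable_eval_mul_exp_neg_mul_sq one_half_pos

theorem tendsto_osc_cocompact (n : ℕ) : Tendsto (osc n) (cocompact ℝ) (𝓝 0) := by
  obtain ⟨p, hp⟩ := exists_osc_eq_eval_mul_exp n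
  simpa only [← hp] using p.tendsto_eval_mul_exp_neg_mul_sq_cocompact one_half_pos

theorem hasDerivAt_osc_succ (n : ℕ) (x : ℝ) :
    HasDerivAt (osc (n + 1))
      (√((n + 1) / 2) * osc n x - √((n + 2) / 2) * osc (n + 2) x) x := by
  have hgauss : HasDerivAt (fun t => exp (-t ^ 2 / 2)) (-x * exp (-x ^ 2 / 2)) x :=
    ((hasDerivAt_pow 2 x).neg.div_const 2).exp.congr_deriv
      (by simp only [Pi.neg_apply, Nat.cast_ofNat, Nat.add_one_sub_one, pow_one]; ring)
  rw [show osc (n + 1) = fun t => hNorm (n + 1) ^ (-(1 : ℝ) / 2) *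
      (exp (-t ^ 2 / 2) * physHermite (n + 1) t) from funext fun t => mul_assoc _ _ _]
  refine ((hgauss.mul (hasDerivAt_physHermite_succ n x)).const_mul _).congr_deriv ?_
  rw [osc, osc, hNorm_rpow_neg_half_eq_mul_succ n, hNorm_rpow_neg_half_eq_mul_succ (n + 1),
    physHermite_succ_succ, sqrt_div_two, sqrt_div_two]
  push_cast
  rw [show (n : ℝ) + 1 + 1 = n + 2 by ring]
  linear_combination (-(√(2 * (n + 2)) * hNorm (n + 2) ^ (-(1 : ℝ) / 2) * exp (-x ^ 2 / 2) *
    physHermite n x) / 2) * sq_sqrt (by positivity : (0 : ℝ) ≤ 2 * (n + 1))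

theorem integrable_sign_sub_mul {g : ℝ → ℝ} (hg : Integrable g) (y : ℝ) :
    Integrable fun u => Real.sign (y - u) * g u :=
  hg.bdd_mul (measurable_sign.comp (measurable_const.sub measurable_id)).aestronglyMeasurable
    (Eventually.of_forall fun u => abs_sign_le_one (y - u))

theorem epsOp_sub {f g : ℝ → ℝ} (hf : Integrable f) (hg : Integrable g) (y : ℝ) :
    epsOp (fun u => f u - g u) y = epsOp f y - epsOp g y := by
  simp only [epsOp, mul_sub,
    integral_sub (integrable_sign_sub_mul hf y) (integrable_sign_sub_mul hg y)]

theorem epsOp_const_mul (c : ℝ) (f : ℝ → ℝ) (y : ℝ) :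
    epsOp (fun u => c * f u) y = c * epsOp f y := by
  simp only [epsOp, mul_left_comm _ c, integral_const_mul]

theorem epsOp_of_hasDerivAt {f f' : ℝ → ℝ} (hf : ∀ u, HasDerivAt f (f' u) u)
    (hf' : Integrable f') (hbot : Tendsto f atBot (𝓝 0)) (htop : Tendsto f atTop (𝓝 0))
    (y : ℝ) : epsOp f' y = f y := by
  have hint := integrable_sign_sub_mul hf' y
  have hleft : ∫ u in Iic y, Real.sign (y - u) * f' u = f y := by
    rw [integral_Iic_eq_integral_Iio, setIntegral_congr_fun measurableSet_Iio (g := f')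
        fun u hu => by simp [Real.sign_of_pos (sub_pos.2 hu)],
      ← integral_Iic_eq_integral_Iio,
      integral_Iic_of_hasDerivAt_of_tendsto' (fun u _ => hf u) hf'.integrableOn hbot, sub_zero]
  have hright : ∫ u in Ioi y, Real.sign (y - u) * f' u = f y := by
    rw [setIntegral_congr_fun measurableSet_Ioi (g := fun u => -f' u)
        fun u hu => by simp [Real.sign_of_neg (sub_neg.2 hu)],
      integral_neg, integral_Ioi_of_hasDerivAt_of_tendsto' (fun u _ => hf u) hf'.integrableOn htop,
      zero_sub, neg_neg]
  rw [epsOp, ← intervalIntegral.integral_Iic_add_Ioi hint.integrableOn hint.integrableOn, hleft,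
    hright]
  ring

theorem sqrt_mul_epsOp_osc_sub (n : ℕ) (y : ℝ) :
    √((n + 1) / 2) * epsOp (osc n) y - √((n + 2) / 2) * epsOp (osc (n + 2)) y =
      osc (n + 1) y := by
  have hint (k : ℕ) (c : ℝ) : Integrable fun u => c * osc k u := (integrable_osc k).const_mul c
  rw [← epsOp_const_mul, ← epsOp_const_mul, ← epsOp_sub (hint _ _) (hint _ _)]
  exact epsOp_of_hasDerivAt (hasDerivAt_osc_succ n) ((hint _ _).sub (hint _ _))
    ((tendsto_osc_cocompact _).mono_left atBot_le_cocompact)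
    ((tendsto_osc_cocompact _).mono_left atTop_le_cocompact) y

/-- The GOE kernel equals the GUE kernel plus a rank-one term:
`S_{N+1,1}(x,y) = S_{N,2}(x,y) + (√(2N)/2) φ_N(x) (ε φ_{N-1})(y)`. -/
theorem goe_kernel_eq_gue_kernel_plus_rank_one (N : ℕ) (hN : 1 ≤ N) (x y : ℝ) :
    (∑ n ∈ Finset.range (N + 1), osc n x * osc n y) +
      Real.sqrt ((N + 1) / 2) * osc N x * epsOp (osc (N + 1)) y =
    (∑ k ∈ Finset.range N, osc k x * osc k y) +
      Real.sqrt (2 * N) / 2 * osc N x * epsOp (osc (N - 1)) y := by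
  obtain ⟨n, rfl⟩ := Nat.exists_eq_add_of_le' hN
  rw [Finset.sum_range_succ, Nat.add_sub_cancel, ← sqrt_div_two]
  push_cast
  rw [show (n : ℝ) + 1 + 1 = n + 2 by ring]
  linear_combination (-osc (n + 1) x) * sqrt_mul_epsOp_osc_sub n y
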